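/- arXiv:1712.04521 — 3 statements merged into one kernel-verified Lean document; each statement's English description precedes it below -/
import Mathlib

section
/- For every real number κ ≠ 0 and every real number x ≥ 0, the Whittaker mode w_κ(x) is purely imaginary; that is, Re(w_κ(x)) = 0. -/
open MeasureTheory Real Complex

/-- The Whittaker mode `w_κ(x)` for a real `κ` (set to `0` when `κ = 0`). -/
noncomputable def whittakerMode (κ x : ℝ) : ℂ :=
  if κ = 0 then 0 else
    (4 * Complex.I * (κ : ℂ) ^ 2 * Complex.exp (-Complex.I * κ * x) *
        (Real.sinh (Real.pi / (2 * κ)) : ℂ) / (Real.pi : ℂ)) *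
      ∫ s in Set.Ioo (0 : ℝ) 1,
        Complex.exp (2 * Complex.I * κ * x * s) *
          Complex.exp ((Complex.I / (2 * κ)) * ((Real.log s : ℂ) - (Real.log (1 - s) : ℂ)))

lemma integral_Ioo_comp_one_sub (F : ℝ → ℂ) :
    ∫ s in Set.Ioo (0 : ℝ) 1, F (1 - s) = ∫ s in Set.Ioo (0 : ℝ) 1, F s := by
  rw [← integral_indicator measurableSet_Ioo, ← integral_indicator measurableSet_Ioo,
    ← integral_sub_left_eq_self (Set.indicator (Set.Ioo 0 1) F) volume 1]
  congr 1
  ext s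
  by_cases h : s ∈ Set.Ioo (0 : ℝ) 1
  · have h' : (1 : ℝ) - s ∈ Set.Ioo (0 : ℝ) 1 := by
      constructor <;> [linarith [h.2]; linarith [h.1]]
    rw [Set.indicator_of_mem h, Set.indicator_of_mem h']
  · have h' : (1 : ℝ) - s ∉ Set.Ioo (0 : ℝ) 1 := by
      intro hc
      exact h ⟨by linarith [hc.2], by linarith [hc.1]⟩
    rw [Set.indicator_of_notMem h, Set.indicator_of_notMem h']

/-- For every `κ ≠ 0` and `x ≥ 0`, the Whittaker mode `w_κ(x)` is purely imaginary. -/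
theorem whittakerMode_purely_imaginary (κ x : ℝ) (hκ : κ ≠ 0) (hx : 0 ≤ x) :
    (whittakerMode κ x).re = 0 := by
  set f : ℝ → ℂ := fun s =>
    Complex.exp (2 * Complex.I * κ * x * s) *
      Complex.exp ((Complex.I / (2 * κ)) * ((Real.log s : ℂ) - (Real.log (1 - s) : ℂ))) with hf
  set J : ℂ := ∫ s in Set.Ioo (0 : ℝ) 1, f s with hJ
  have hconjJ : (starRingEnd ℂ) J = Complex.exp (-(2 * Complex.I * κ * x)) * J := by
    rw [hJ, ← integral_conj, ← integral_Ioo_comp_one_sub (fun s => (starRingEnd ℂ) (f s)),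
      ← integral_const_mul]
    refine setIntegral_congr_fun measurableSet_Ioo (fun s _ => ?_)
    simp only [hf, map_mul, ← Complex.exp_conj, map_sub, map_div₀, Complex.conj_I,
      Complex.conj_ofReal, map_ofNat, sub_sub_cancel]
    rw [← Complex.exp_add, ← Complex.exp_add, ← Complex.exp_add]
    congr 1
    push_cast
    ring
  have hw : (starRingEnd ℂ) (whittakerMode κ x) = -(whittakerMode κ x) := by
    rw [whittakerMode, if_neg hκ]
    simp only [map_mul, map_div₀, map_pow, Complex.conj_I, Complex.conj_ofReal, map_ofNat,
      ← Complex.exp_conj, map_neg, ← hJ, ← hf]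
    rw [hconjJ]
    have he : Complex.exp (- -Complex.I * ↑κ * ↑x) * Complex.exp (-(2 * Complex.I * ↑κ * ↑x))
        = Complex.exp (-Complex.I * ↑κ * ↑x) := by
      rw [← Complex.exp_add]; congr 1; ring
    linear_combination (-4 * Complex.I * (κ:ℂ)^2 *
      ((Real.sinh (Real.pi/(2*κ)) : ℝ) : ℂ) / (Real.pi : ℂ) * J) * he
  have := congrArg Complex.re hw
  rw [Complex.conj_re, Complex.neg_re] at this
  linarith
end

section
/- For every real μ, every real σ > 0, and every real x ≥ 0, the Whittaker wavepacket at time zero Ψ(x) = ∫_{ℝ} exp(−(κ−μ)²/(2σ²)) · w_κ(x) dκ is purely imaginary; that is, Re(Ψ(x)) = 0. -/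
open MeasureTheory Real Complex

/-- The Whittaker wavepacket at time zero, a Gaussian superposition of Whittaker modes. -/
noncomputable def whittakerPacket (μ σ x : ℝ) : ℂ :=
  ∫ κ : ℝ, (Real.exp (-(κ - μ) ^ 2 / (2 * σ ^ 2)) : ℂ) * whittakerMode κ x

lemma mode_integral_conj (κ x : ℝ) :
    (∫ s in Set.Ioo (0 : ℝ) 1,
        Complex.exp (2 * Complex.I * κ * x * s) *
          Complex.exp ((Complex.I / (2 * κ)) * ((Real.log s : ℂ) - (Real.log (1 - s) : ℂ))))
    = Complex.exp (2 * Complex.I * κ * x) *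
      (starRingEnd ℂ) (∫ s in Set.Ioo (0 : ℝ) 1,
        Complex.exp (2 * Complex.I * κ * x * s) *
          Complex.exp ((Complex.I / (2 * κ)) * ((Real.log s : ℂ) - (Real.log (1 - s) : ℂ)))) := by
  set g : ℝ → ℂ := fun s =>
    Complex.exp (2 * Complex.I * κ * x * s) *
      Complex.exp ((Complex.I / (2 * κ)) * ((Real.log s : ℂ) - (Real.log (1 - s) : ℂ))) with hg
  have h2 : ∀ s : ℝ, g (1 - s) = Complex.exp (2 * Complex.I * κ * x) * (starRingEnd ℂ) (g s) := by
    intro s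
    have hs : (1:ℝ) - (1 - s) = s := by ring
    simp only [hg, hs, map_mul, ← Complex.exp_conj, ← Complex.exp_add]
    congr 1
    simp only [map_add, map_mul, map_div₀, map_sub, Complex.conj_ofReal, Complex.conj_I,
      map_ofNat]
    push_cast
    ring
  calc (∫ s in Set.Ioo (0 : ℝ) 1, g s)
      = ∫ s in Set.Ioo (0 : ℝ) 1, g (1 - s) := by
        rw [← MeasureTheory.integral_Ioc_eq_integral_Ioo,
            ← MeasureTheory.integral_Ioc_eq_integral_Ioo,
            ← intervalIntegral.integral_of_le (by norm_num : (0:ℝ) ≤ 1),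
            ← intervalIntegral.integral_of_le (by norm_num : (0:ℝ) ≤ 1)]
        rw [intervalIntegral.integral_comp_sub_left g 1]
        norm_num
    _ = ∫ s in Set.Ioo (0 : ℝ) 1,
          Complex.exp (2 * Complex.I * κ * x) * (starRingEnd ℂ) (g s) := by simp only [h2]
    _ = Complex.exp (2 * Complex.I * κ * x) *
          ∫ s in Set.Ioo (0 : ℝ) 1, (starRingEnd ℂ) (g s) := MeasureTheory.integral_const_mul _ _
    _ = Complex.exp (2 * Complex.I * κ * x) *
          (starRingEnd ℂ) (∫ s in Set.Ioo (0 : ℝ) 1, g s) := by rw [integral_conj]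

lemma whittakerMode_re (κ x : ℝ) :
    (whittakerMode κ x).re = 0 := by
  rcases eq_or_ne κ 0 with hκ | hκ
  · simp [whittakerMode, hκ]
  · have key : (starRingEnd ℂ) (whittakerMode κ x) = -whittakerMode κ x := by
      simp only [whittakerMode, if_neg hκ]
      set I0 := ∫ s in Set.Ioo (0 : ℝ) 1,
        Complex.exp (2 * Complex.I * κ * x * s) *
          Complex.exp ((Complex.I / (2 * κ)) * ((Real.log s : ℂ) - (Real.log (1 - s) : ℂ)))
        with hI0
      have h := mode_integral_conj κ x
      rw [← hI0] at h
      have hconj : (starRingEnd ℂ) I0 = Complex.exp (-(2 * Complex.I * κ * x)) * I0 := by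
        conv_rhs => rw [h]
        rw [← mul_assoc, ← Complex.exp_add,
          show (-(2 * Complex.I * κ * x) + 2 * Complex.I * κ * x : ℂ) = 0 from by ring,
          Complex.exp_zero, one_mul]
      rw [map_mul, hconj, map_div₀, map_mul, map_mul, map_mul, ← Complex.exp_conj]
      simp only [map_mul, map_neg, map_ofNat, Complex.conj_I, Complex.conj_ofReal, map_pow]
      have e : Complex.exp (- -Complex.I * (κ:ℂ) * x) * Complex.exp (-(2 * Complex.I * (κ:ℂ) * x))
          = Complex.exp (-Complex.I * (κ:ℂ) * x) := by
        rw [← Complex.exp_add]; congr 1; ring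
      linear_combination (4 * -Complex.I * (κ:ℂ)^2 *
        ((Real.sinh (Real.pi/(2*κ)) : ℝ) : ℂ) / (Real.pi : ℂ) * I0) * e
    have := congrArg Complex.re key
    simp only [Complex.conj_re, Complex.neg_re] at this
    linarith


/-- The Whittaker wavepacket at time zero is purely imaginary. -/
theorem whittakerPacket_purely_imaginary (μ σ x : ℝ) (hσ : 0 < σ) (hx : 0 ≤ x) :
    (whittakerPacket μ σ x).re = 0 := by
  unfold whittakerPacket
  by_cases h : Integrable (fun κ : ℝ =>
      (Real.exp (-(κ - μ) ^ 2 / (2 * σ ^ 2)) : ℂ) * whittakerMode κ x)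
  · have : (∫ κ : ℝ, (Real.exp (-(κ - μ) ^ 2 / (2 * σ ^ 2)) : ℂ) * whittakerMode κ x).re
        = RCLike.re (∫ κ : ℝ, (Real.exp (-(κ - μ) ^ 2 / (2 * σ ^ 2)) : ℂ) * whittakerMode κ x) :=
      rfl
    rw [this, ← integral_re h]
    have hz : ∀ κ : ℝ, RCLike.re ((Real.exp (-(κ - μ) ^ 2 / (2 * σ ^ 2)) : ℂ) *
        whittakerMode κ x) = 0 := by
      intro κ
      simp only [RCLike.re_to_complex, Complex.re_ofReal_mul, whittakerMode_re, mul_zero]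
    simp only [hz, integral_zero]
  · rw [MeasureTheory.integral_undef h]
    simp
end

section
/- Let 0 < a < b be real numbers, μ ∈ ℝ, and σ > 0. Then there exists a constant C > 0 such that for all real x ≥ e, the integral g(x) = ∫_a^b exp(−(κ−μ)²/(2σ²)) · e^{−iκx} · e^{i (log x)/(2κ)} dκ satisfies |g(x)| ≤ C·(1 + log x)/x + C·(1 + log x)²/x². -/
/-!
Write the integrand as `A κ · exp (i φ κ)` with the Gaussian amplitude `A` and the real phase
`φ κ = log x / (2κ) - κx`. Since `|φ' κ| = x + log x / (2κ²) ≥ x`, one integration by parts against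
`exp (i φ) = (exp (i φ))' / (i φ')` gives boundary terms of size `1/x` and a remainder
`∫ (A / (i φ'))' exp (i φ)`, whose integrand is at most `|A'| / |φ'| + |A| |φ''| / |φ'|²`,
i.e. `O(1/x) + O(log x / x²)` because `φ'' κ = log x / κ³`.
-/

open MeasureTheory Real Complex intervalIntegral Set
open scoped Interval

section IntegrationByParts

variable {A A' : ℝ → ℂ} {φ φ' φ'' : ℝ → ℝ} {a b : ℝ}

theorem integral_mul_cexp_phase_eq
    (hA : ∀ t ∈ [[a, b]], HasDerivAt A (A' t) t)
    (hφ : ∀ t ∈ [[a, b]], HasDerivAt φ (φ' t) t)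
    (hφ' : ∀ t ∈ [[a, b]], HasDerivAt φ' (φ'' t) t)
    (hφ'0 : ∀ t ∈ [[a, b]], φ' t ≠ 0)
    (hA'c : ContinuousOn A' [[a, b]]) (hφ''c : ContinuousOn φ'' [[a, b]]) :
    ∫ t in a..b, A t * cexp (φ t * I) =
      A b / (φ' b * I) * cexp (φ b * I) - A a / (φ' a * I) * cexp (φ a * I) -
        ∫ t in a..b, (A' t / (φ' t * I) - A t * φ'' t / (φ' t ^ 2 * I)) * cexp (φ t * I) := by
  have hφ'I : ∀ t ∈ [[a, b]], (φ' t : ℂ) * I ≠ 0 := fun t ht =>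
    mul_ne_zero (ofReal_ne_zero.mpr (hφ'0 t ht)) I_ne_zero
  have hAc : ContinuousOn A [[a, b]] := fun t ht => (hA t ht).continuousAt.continuousWithinAt
  have hφc : ContinuousOn φ [[a, b]] := fun t ht => (hφ t ht).continuousAt.continuousWithinAt
  have hφ'c : ContinuousOn φ' [[a, b]] := fun t ht => (hφ' t ht).continuousAt.continuousWithinAt
  have hu : ∀ t ∈ [[a, b]], HasDerivAt (fun t => A t / (φ' t * I))
      (A' t / (φ' t * I) - A t * φ'' t / (φ' t ^ 2 * I)) t := by
    intro t ht
    refine ((hA t ht).div ((hφ' t ht).ofReal_comp.mul_const I) (hφ'I t ht)).congr_deriv ?_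
    have := ofReal_ne_zero.mpr (hφ'0 t ht)
    field_simp
  have hv : ∀ t ∈ [[a, b]],
      HasDerivAt (fun t => cexp (φ t * I)) (cexp (φ t * I) * (φ' t * I)) t :=
    fun t ht => ((hφ t ht).ofReal_comp.mul_const I).cexp
  have hu'i : IntervalIntegrable (fun t => A' t / (φ' t * I) - A t * φ'' t / (φ' t ^ 2 * I))
      volume a b := by
    have hφ'Cc : ContinuousOn (fun t => (φ' t : ℂ)) [[a, b]] :=
      continuous_ofReal.comp_continuousOn hφ'c
    have hφ''Cc : ContinuousOn (fun t => (φ'' t : ℂ)) [[a, b]] :=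
      continuous_ofReal.comp_continuousOn hφ''c
    refine ContinuousOn.intervalIntegrable ((hA'c.div (hφ'Cc.mul_const I) hφ'I).sub
      ((hAc.mul hφ''Cc).div ((hφ'Cc.pow 2).mul_const I) fun t ht => ?_))
    simp [hφ'0 t ht]
  have hv'i : IntervalIntegrable (fun t => cexp (φ t * I) * (φ' t * I)) volume a b := by
    refine ContinuousOn.intervalIntegrable ?_
    fun_prop
  rw [← integral_mul_deriv_eq_deriv_mul hu hv hu'i hv'i]
  refine integral_congr fun t ht => ?_
  have := ofReal_ne_zero.mpr (hφ'0 t ht)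
  field_simp

theorem norm_integral_mul_cexp_phase_le {m M₀ M₁ M₂ : ℝ}
    (hA : ∀ t ∈ [[a, b]], HasDerivAt A (A' t) t)
    (hφ : ∀ t ∈ [[a, b]], HasDerivAt φ (φ' t) t)
    (hφ' : ∀ t ∈ [[a, b]], HasDerivAt φ' (φ'' t) t)
    (hA'c : ContinuousOn A' [[a, b]]) (hφ''c : ContinuousOn φ'' [[a, b]]) (hm : 0 < m)
    (hφ'm : ∀ t ∈ [[a, b]], m ≤ |φ' t|) (hA₀ : ∀ t ∈ [[a, b]], ‖A t‖ ≤ M₀)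
    (hA₁ : ∀ t ∈ [[a, b]], ‖A' t‖ ≤ M₁) (hφ''M : ∀ t ∈ [[a, b]], |φ'' t| ≤ M₂) :
    ‖∫ t in a..b, A t * cexp (φ t * I)‖ ≤ 2 * M₀ / m + |b - a| * (M₁ / m + M₀ * M₂ / m ^ 2) := by
  have hφ'0 : ∀ t ∈ [[a, b]], φ' t ≠ 0 := fun t ht => abs_pos.mp (hm.trans_le (hφ'm t ht))
  have hM₀ : 0 ≤ M₀ := (norm_nonneg _).trans (hA₀ a left_mem_uIcc)
  have hM₂ : 0 ≤ M₂ := (abs_nonneg _).trans (hφ''M a left_mem_uIcc)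
  have hbdry : ∀ t ∈ [[a, b]], ‖A t / (φ' t * I) * cexp (φ t * I)‖ ≤ M₀ / m := by
    intro t ht
    rw [norm_mul, norm_exp_ofReal_mul_I, mul_one, norm_div, norm_mul, norm_I, mul_one, norm_real,
      Real.norm_eq_abs]
    exact div_le_div₀ hM₀ (hA₀ t ht) hm (hφ'm t ht)
  have hrem : ∀ t ∈ [[a, b]],
      ‖(A' t / (φ' t * I) - A t * φ'' t / (φ' t ^ 2 * I)) * cexp (φ t * I)‖ ≤
        M₁ / m + M₀ * M₂ / m ^ 2 := by
    intro t ht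
    rw [norm_mul, norm_exp_ofReal_mul_I, mul_one]
    refine (norm_sub_le _ _).trans (add_le_add ?_ ?_) <;>
      simp only [norm_div, norm_mul, norm_pow, norm_I, mul_one, norm_real, Real.norm_eq_abs]
    · exact div_le_div₀ ((norm_nonneg _).trans (hA₁ t ht)) (hA₁ t ht) hm (hφ'm t ht)
    · exact div_le_div₀ (mul_nonneg hM₀ hM₂)
        (mul_le_mul (hA₀ t ht) (hφ''M t ht) (abs_nonneg _) hM₀) (by positivity)
        (pow_le_pow_left₀ hm.le (hφ'm t ht) 2)
  rw [integral_mul_cexp_phase_eq hA hφ hφ' hφ'0 hA'c hφ''c]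
  calc _ ≤ ‖A b / (φ' b * I) * cexp (φ b * I)‖ + ‖A a / (φ' a * I) * cexp (φ a * I)‖ +
        ‖∫ t in a..b, (A' t / (φ' t * I) - A t * φ'' t / (φ' t ^ 2 * I)) * cexp (φ t * I)‖ :=
        (norm_sub_le _ _).trans (add_le_add_left (norm_sub_le _ _) _)
    _ ≤ M₀ / m + M₀ / m + (M₁ / m + M₀ * M₂ / m ^ 2) * |b - a| :=
        add_le_add (add_le_add (hbdry b right_mem_uIcc) (hbdry a left_mem_uIcc))
          (norm_integral_le_of_norm_le_const fun t ht => hrem t (uIoc_subset_uIcc ht))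
    _ = 2 * M₀ / m + |b - a| * (M₁ / m + M₀ * M₂ / m ^ 2) := by ring

end IntegrationByParts

theorem hasDerivAt_exp_neg_sq_div (μ σ t : ℝ) :
    HasDerivAt (fun t => rexp (-(t - μ) ^ 2 / (2 * σ ^ 2)))
      (-(t - μ) / σ ^ 2 * rexp (-(t - μ) ^ 2 / (2 * σ ^ 2))) t := by
  have h : HasDerivAt (fun t => -(t - μ) ^ 2 / (2 * σ ^ 2)) (-(t - μ) / σ ^ 2) t := by
    refine ((((hasDerivAt_id t).sub_const μ).pow 2).neg.div_const (2 * σ ^ 2)).congr_deriv ?_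
    simp only [id, Nat.cast_ofNat]
    ring
  exact h.exp.congr_deriv (mul_comm _ _)

theorem exp_neg_sq_div_le_one (μ σ t : ℝ) : rexp (-(t - μ) ^ 2 / (2 * σ ^ 2)) ≤ 1 :=
  exp_le_one_iff.mpr (div_nonpos_of_nonpos_of_nonneg (neg_nonpos.mpr (sq_nonneg _)) (by positivity))

theorem abs_deriv_exp_neg_sq_div_le (μ σ t : ℝ) :
    |-(t - μ) / σ ^ 2 * rexp (-(t - μ) ^ 2 / (2 * σ ^ 2))| ≤ |t - μ| / σ ^ 2 := by
  rw [abs_mul, abs_div, abs_neg, abs_of_nonneg (sq_nonneg σ), abs_of_pos (exp_pos _)]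
  exact mul_le_of_le_one_right (by positivity) (exp_neg_sq_div_le_one μ σ t)

theorem hasDerivAt_div_two_mul_sub_mul (x L : ℝ) {t : ℝ} (ht : t ≠ 0) :
    HasDerivAt (fun t => L / (2 * t) - t * x) (-(x + L / (2 * t ^ 2))) t := by
  refine ((hasDerivAt_const t L).div ((hasDerivAt_id t).const_mul 2) (by simpa using ht)).sub
    ((hasDerivAt_id t).mul_const x) |>.congr_deriv ?_
  simp only [id]
  field_simp
  ring

theorem le_abs_neg_add_div_two_mul_sq {x L : ℝ} (hx : 0 ≤ x) (hL : 0 ≤ L) (t : ℝ) :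
    x ≤ |-(x + L / (2 * t ^ 2))| := by
  rw [abs_neg, abs_of_nonneg (by positivity)]
  exact le_add_of_nonneg_right (by positivity)

theorem hasDerivAt_neg_add_div_two_mul_sq (x L : ℝ) {t : ℝ} (ht : t ≠ 0) :
    HasDerivAt (fun t => -(x + L / (2 * t ^ 2))) (L / t ^ 3) t := by
  refine (((hasDerivAt_const t L).div ((hasDerivAt_pow 2 t).const_mul 2)
    (by simpa using ht)).const_add x).neg |>.congr_deriv ?_
  field_simp
  ring

theorem cexp_neg_I_mul_mul_cexp_I_mul_div (x L κ : ℝ) :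
    cexp (-I * κ * x) * cexp (I * L / (2 * κ)) = cexp ((L / (2 * κ) - κ * x : ℝ) * I) := by
  rw [← Complex.exp_add]
  push_cast
  ring_nf

theorem norm_integral_gaussian_chirp_le {a b μ σ x L : ℝ} (ha : 0 < a) (hab : a ≤ b) (hx : 0 < x)
    (hL : 0 ≤ L) :
    ‖∫ κ in a..b, (rexp (-(κ - μ) ^ 2 / (2 * σ ^ 2)) : ℂ) * cexp (-I * κ * x) *
        cexp (I * L / (2 * κ))‖ ≤
      2 / x + (b - a) * ((b + |μ|) / σ ^ 2 / x + L / a ^ 3 / x ^ 2) := by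
  have hIcc : ∀ t ∈ [[a, b]], a ≤ t ∧ t ≤ b := fun t ht => by rwa [uIcc_of_le hab] at ht
  have hpos : ∀ t ∈ [[a, b]], 0 < t := fun t ht => ha.trans_le (hIcc t ht).1
  simp_rw [mul_assoc _ (cexp _), cexp_neg_I_mul_mul_cexp_I_mul_div]
  refine (norm_integral_mul_cexp_phase_le (M₀ := 1) (M₁ := (b + |μ|) / σ ^ 2) (M₂ := L / a ^ 3)
    (fun t _ => (hasDerivAt_exp_neg_sq_div μ σ t).ofReal_comp)
    (fun t ht => hasDerivAt_div_two_mul_sub_mul x L (hpos t ht).ne')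
    (fun t ht => hasDerivAt_neg_add_div_two_mul_sq x L (hpos t ht).ne')
    (by fun_prop)
    (continuousOn_const.div (continuousOn_pow 3) fun t ht => pow_ne_zero 3 (hpos t ht).ne')
    hx (fun t _ => le_abs_neg_add_div_two_mul_sq hx.le hL t) (fun t _ => ?_) (fun t ht => ?_)
    (fun t ht => ?_)).trans_eq (by rw [abs_of_nonneg (sub_nonneg.mpr hab)]; ring)
  · rw [norm_real, norm_of_nonneg (exp_pos _).le]
    exact exp_neg_sq_div_le_one μ σ t
  · rw [norm_real, Real.norm_eq_abs]
    refine (abs_deriv_exp_neg_sq_div_le μ σ t).trans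
      (div_le_div_of_nonneg_right ?_ (sq_nonneg σ))
    exact (abs_sub _ _).trans
      (add_le_add_left ((abs_of_pos (hpos t ht)).trans_le (hIcc t ht).2) _)
  · rw [abs_div, abs_of_nonneg hL, abs_of_pos (pow_pos (hpos t ht) 3)]
    exact div_le_div_of_nonneg_left hL (pow_pos ha 3) (pow_le_pow_left₀ ha.le (hIcc t ht).1 3)

theorem oscillatory_integral_decay_general (a b μ σ : ℝ) (ha : 0 < a) (hab : a < b) :
    ∃ C : ℝ, 0 < C ∧ ∀ x : ℝ, Real.exp 1 ≤ x →
      ‖∫ κ in a..b,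
          (Real.exp (-(κ - μ) ^ 2 / (2 * σ ^ 2)) : ℂ) *
            Complex.exp (-Complex.I * κ * x) *
            Complex.exp (Complex.I * (Real.log x) / (2 * κ))‖ ≤
        C * (1 + Real.log x) / x + C * (1 + Real.log x) ^ 2 / x ^ 2 := by
  have hba : 0 < b - a := sub_pos.mpr hab
  have hP : 0 < 2 + (b - a) * ((b + |μ|) / σ ^ 2) :=
    add_pos_of_pos_of_nonneg two_pos
      (mul_nonneg hba.le (div_nonneg (by linarith [abs_nonneg μ]) (sq_nonneg σ)))
  have hQ : 0 < (b - a) / a ^ 3 := div_pos hba (pow_pos ha 3)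
  refine ⟨_, add_pos hP hQ, fun x hx => ?_⟩
  have hx1 : 1 ≤ x := (one_le_exp zero_le_one).trans hx
  have hL : 0 ≤ Real.log x := log_nonneg hx1
  calc _ ≤ _ := norm_integral_gaussian_chirp_le ha hab.le (by linarith) hL
    _ = (2 + (b - a) * ((b + |μ|) / σ ^ 2)) / x + (b - a) / a ^ 3 * Real.log x / x ^ 2 := by
        field_simp
        ring
    _ ≤ _ := by
        gcongr ?_ / x + ?_ / x ^ 2
        · nlinarith [mul_nonneg hP.le hL, mul_nonneg hQ.le hL]
        · nlinarith [mul_nonneg hP.le (sq_nonneg (1 + Real.log x)),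
            mul_nonneg hQ.le (sq_nonneg (Real.log x))]

/-- Stationary-phase / integration-by-parts bound for the oscillatory integral
`g(x) = ∫_a^b exp(−(κ−μ)²/(2σ²)) e^{−iκx} e^{i(log x)/(2κ)} dκ` for `x ≥ e`. -/
theorem oscillatory_integral_decay (a b μ σ : ℝ) (ha : 0 < a) (hab : a < b) (hσ : 0 < σ) :
    ∃ C : ℝ, 0 < C ∧ ∀ x : ℝ, Real.exp 1 ≤ x →
      ‖∫ κ in a..b,
          (Real.exp (-(κ - μ) ^ 2 / (2 * σ ^ 2)) : ℂ) *
            Complex.exp (-Complex.I * κ * x) *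
            Complex.exp (Complex.I * (Real.log x) / (2 * κ))‖ ≤
        C * (1 + Real.log x) / x + C * (1 + Real.log x) ^ 2 / x ^ 2 :=
  oscillatory_integral_decay_general a b μ σ ha hab
end
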